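/- Let p be a strictly positive probability distribution on a finite product space indexed by V. Then the pairwise Markov property with respect to a graph G (X_i ⊥ X_j | X_{V∖{i,j}} for all non-edges {i,j}) implies the local Markov property (X_j ⊥ X_{V∖(mb(j)∪{j})} | X_{mb(j)} for all j, where mb(j) is the set of neighbors of j in G). -/
import Mathlib


open Finset

variable {V : Type*} [Fintype V] [DecidableEq V] {X : V → Type*}
  [∀ j, Fintype (X j)] [∀ j, DecidableEq (X j)]

/-- Marginal probability of the event that the coordinates in `S` agree with `x`. -/
noncomputable def marg (p : (∀ j, X j) → ℝ) (S : Finset V) (x : ∀ j, X j) : ℝ :=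
  ∑ y ∈ Finset.univ.filter (fun y : ∀ j, X j => ∀ j ∈ S, y j = x j), p y

/-- Context-specific independence `X_A ⊥ X_B | x_C, X_S` in cross-multiplied form. -/
def CSI (p : (∀ j, X j) → ℝ) (A B C S : Finset V) (xC : ∀ j, X j) : Prop :=
  ∀ x : ∀ j, X j, (∀ j ∈ C, x j = xC j) →
    marg p (A ∪ B ∪ C ∪ S) x * marg p (C ∪ S) x
      = marg p (A ∪ C ∪ S) x * marg p (B ∪ C ∪ S) x

/-- Conditional independence `X_A ⊥ X_B | X_S` in cross-multiplied form. -/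
def CondIndep (p : (∀ j, X j) → ℝ) (A B S : Finset V) : Prop :=
  ∀ x : ∀ j, X j,
    marg p (A ∪ B ∪ S) x * marg p S x = marg p (A ∪ S) x * marg p (B ∪ S) x

/- ### Auxiliary lemmas -/

lemma marg_congr (p : (∀ j, X j) → ℝ) (S : Finset V) {x x' : ∀ j, X j}
    (h : ∀ j ∈ S, x j = x' j) : marg p S x = marg p S x' := by
  unfold marg
  apply Finset.sum_congr _ (fun _ _ => rfl)
  ext y
  simp only [Finset.mem_filter, Finset.mem_univ, true_and]
  constructor
  · intro hy j hj; rw [hy j hj, h j hj]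
  · intro hy j hj; rw [hy j hj, h j hj]

lemma marg_pos {p : (∀ j, X j) → ℝ} (hp : ∀ x, 0 < p x) (S : Finset V)
    (x : ∀ j, X j) : 0 < marg p S x := by
  apply Finset.sum_pos (fun y _ => hp y)
  exact ⟨x, by simp⟩

lemma marg_univ (p : (∀ j, X j) → ℝ) (x : ∀ j, X j) :
    marg p (Finset.univ : Finset V) x = p x := by
  unfold marg
  have : (Finset.univ.filter (fun y : ∀ j, X j => ∀ j ∈ (Finset.univ : Finset V),
      y j = x j)) = {x} := by
    ext y
    simp only [Finset.mem_filter, Finset.mem_univ, true_and, Finset.mem_singleton]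
    constructor
    · intro h; funext j; exact h j trivial
    · intro h j _; rw [h]
  rw [this, Finset.sum_singleton]

/-- From a "key form" identity `p x * marg T x = marg (insert j T) x * marg (univ\{j}) x`,
the ratio `p x / marg (univ\{j}) x` depends only on the coordinates in `insert j T`. -/
lemma ratio_congr {p : (∀ j, X j) → ℝ} (hp : ∀ x, 0 < p x) (j : V) (T : Finset V)
    (hT : ∀ x, p x * marg p T x
      = marg p (insert j T) x * marg p (Finset.univ \ {j}) x)
    {x x' : ∀ j, X j} (h : ∀ k ∈ insert j T, x k = x' k) :
    p x / marg p (Finset.univ \ {j}) x = p x' / marg p (Finset.univ \ {j}) x' := by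
  have key : ∀ y : ∀ j, X j, p y / marg p (Finset.univ \ {j}) y
      = marg p (insert j T) y / marg p T y := by
    intro y
    have h1 := (marg_pos hp (Finset.univ \ {j}) y).ne'
    have h2 := (marg_pos hp T y).ne'
    field_simp
    linarith [hT y]
  rw [key x, key x', marg_congr p (insert j T) h,
    marg_congr p T (fun k hk => h k (Finset.mem_insert_of_mem hk))]

/-- The "swap" identity: if the ratio depends only on coordinates in `insert j Z`,
then for `x, w` agreeing on `Z` we may swap the `j`-th coordinates. -/
lemma swap_identity {p : (∀ j, X j) → ℝ} (hp : ∀ x, 0 < p x) (j : V) (Z : Finset V)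
    (hjZ : j ∉ Z)
    (hr : ∀ x x' : ∀ j, X j, (∀ k ∈ insert j Z, x k = x' k) →
      p x / marg p (Finset.univ \ {j}) x = p x' / marg p (Finset.univ \ {j}) x')
    (x w : ∀ j, X j) (hxw : ∀ k ∈ Z, w k = x k) :
    p x * p w = p (Function.update w j (x j)) * p (Function.update x j (w j)) := by
  set m : (∀ j, X j) → ℝ := marg p (Finset.univ \ {j}) with hm
  have hmpos : ∀ y, 0 < m y := fun y => marg_pos hp _ y
  have hdec : ∀ y : ∀ j, X j, p y = (p y / m y) * m y :=
    fun y => (div_mul_cancel₀ _ (hmpos y).ne').symm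
  have hmu : m (Function.update w j (x j)) = m w := by
    apply marg_congr
    intro k hk
    have : k ≠ j := by simp at hk; exact hk
    rw [Function.update_of_ne this]
  have hmv : m (Function.update x j (w j)) = m x := by
    apply marg_congr
    intro k hk
    have : k ≠ j := by simp at hk; exact hk
    rw [Function.update_of_ne this]
  have hru : p (Function.update w j (x j)) / m (Function.update w j (x j))
      = p x / m x := by
    apply hr
    intro k hk
    rcases Finset.mem_insert.1 hk with hk | hk
    · subst hk; rw [Function.update_self]
    · have : k ≠ j := fun h => hjZ (h ▸ hk)
      rw [Function.update_of_ne this]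
      exact hxw k hk
  have hrv : p (Function.update x j (w j)) / m (Function.update x j (w j))
      = p w / m w := by
    apply hr
    intro k hk
    rcases Finset.mem_insert.1 hk with hk | hk
    · subst hk; rw [Function.update_self]
    · have : k ≠ j := fun h => hjZ (h ▸ hk)
      rw [Function.update_of_ne this]
      exact (hxw k hk).symm
  calc p x * p w = ((p x / m x) * m x) * ((p w / m w) * m w) := by
        rw [← hdec, ← hdec]
    _ = ((p x / m x) * m w) * ((p w / m w) * m x) := by ring
    _ = ((p (Function.update w j (x j)) / m (Function.update w j (x j)))
          * m (Function.update w j (x j)))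
        * ((p (Function.update x j (w j)) / m (Function.update x j (w j)))
          * m (Function.update x j (w j))) := by
        rw [hru, hrv, hmu, hmv]
    _ = _ := by rw [← hdec, ← hdec]

/-- The counting argument: the swap identity implies the key-form identity for `Z`. -/
lemma key_of_swap {p : (∀ j, X j) → ℝ} (j : V) (Z : Finset V) (hjZ : j ∉ Z)
    (hswap : ∀ x w : ∀ j, X j, (∀ k ∈ Z, w k = x k) →
      p x * p w = p (Function.update w j (x j)) * p (Function.update x j (w j))) :
    ∀ x, p x * marg p Z x
      = marg p (insert j Z) x * marg p (Finset.univ \ {j}) x := by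
  intro x
  unfold marg
  rw [Finset.sum_mul_sum, Finset.mul_sum]
  rw [← Finset.sum_product']
  apply Finset.sum_nbij'
    (fun w => (Function.update w j (x j), Function.update x j (w j)))
    (fun uv => Function.update uv.1 j (uv.2 j))
  · intro w hw
    simp only [Finset.mem_filter, Finset.mem_univ, true_and] at hw
    simp only [Finset.mem_product, Finset.mem_filter, Finset.mem_univ, true_and]
    constructor
    · intro k hk
      rcases Finset.mem_insert.1 hk with hk | hk
      · subst hk; rw [Function.update_self]
      · have : k ≠ j := fun h => hjZ (h ▸ hk)
        rw [Function.update_of_ne this]; exact hw k hk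
    · intro k hk
      have : k ≠ j := by simp at hk; exact hk
      rw [Function.update_of_ne this]
  · intro uv huv
    simp only [Finset.mem_product, Finset.mem_filter, Finset.mem_univ, true_and] at huv
    simp only [Finset.mem_filter, Finset.mem_univ, true_and]
    intro k hk
    have hkj : k ≠ j := fun h => hjZ (h ▸ hk)
    rw [Function.update_of_ne hkj]
    exact huv.1 k (Finset.mem_insert_of_mem hk)
  · intro w hw
    simp only [Function.update_self, Function.update_idem, Function.update_eq_self]
  · intro uv huv
    simp only [Finset.mem_product, Finset.mem_filter, Finset.mem_univ, true_and] at huv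
    have hu : uv.1 j = x j := huv.1 j (Finset.mem_insert_self j Z)
    ext k
    · by_cases hk : k = j
      · subst hk; simp [hu]
      · simp [Function.update_of_ne hk]
    · by_cases hk : k = j
      · subst hk; simp
      · simp only [Function.update_of_ne hk]
        exact (huv.2 k (by simp [hk])).symm
  · intro w hw
    simp only [Finset.mem_filter, Finset.mem_univ, true_and] at hw
    exact hswap x w hw

/-- Translate the key-form identity into `CondIndep` for a singleton versus the rest. -/
lemma condIndep_of_key {p : (∀ j, X j) → ℝ} (j : V) (B : Finset V) (hjB : j ∉ B)
    (h : ∀ x, p x * marg p (Finset.univ \ insert j B) x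
      = marg p (Finset.univ \ B) x * marg p (Finset.univ \ {j}) x) :
    CondIndep p {j} B (Finset.univ \ insert j B) := by
  intro x
  have e1 : ({j} : Finset V) ∪ B ∪ (Finset.univ \ insert j B) = Finset.univ := by
    ext k; simp [Finset.mem_sdiff, Finset.mem_insert]
  have e2 : ({j} : Finset V) ∪ (Finset.univ \ insert j B) = Finset.univ \ B := by
    ext k; simp [Finset.mem_sdiff, Finset.mem_insert]
    constructor
    · rintro (rfl | h) <;> [exact fun hk => hjB hk; tauto]
    · intro hk; by_cases hkj : k = j <;> tauto
  have e3 : B ∪ (Finset.univ \ insert j B) = Finset.univ \ {j} := by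
    ext k; simp [Finset.mem_sdiff, Finset.mem_insert]
    constructor
    · rintro (hk | h) <;> [exact fun hkj => hjB (hkj ▸ hk); tauto]
    · intro hk; by_cases hkB : k ∈ B <;> tauto
  rw [e1, e2, e3, marg_univ]
  exact h x

/-- The converse translation. -/
lemma key_of_condIndep {p : (∀ j, X j) → ℝ} (j : V) (B : Finset V) (hjB : j ∉ B)
    (h : CondIndep p {j} B (Finset.univ \ insert j B)) :
    ∀ x, p x * marg p (Finset.univ \ insert j B) x
      = marg p (insert j (Finset.univ \ insert j B)) x
        * marg p (Finset.univ \ {j}) x := by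
  intro x
  have e1 : ({j} : Finset V) ∪ B ∪ (Finset.univ \ insert j B) = Finset.univ := by
    ext k; simp [Finset.mem_sdiff, Finset.mem_insert]
  have e2 : ({j} : Finset V) ∪ (Finset.univ \ insert j B)
      = insert j (Finset.univ \ insert j B) := by
    ext k; simp [Finset.mem_insert]
  have e3 : B ∪ (Finset.univ \ insert j B) = Finset.univ \ {j} := by
    ext k; simp [Finset.mem_sdiff, Finset.mem_insert]
    constructor
    · rintro (hk | h) <;> [exact fun hkj => hjB (hkj ▸ hk); tauto]
    · intro hk; by_cases hkB : k ∈ B <;> tauto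
  have := h x
  rw [e1, e2, e3, marg_univ] at this
  exact this

/-- for a strictly positive distribution, the pairwise Markov property
with respect to a graph `G` implies the local Markov property. -/
theorem pairwise_implies_local_markov (G : SimpleGraph V) [DecidableRel G.Adj]
    (p : (∀ j, X j) → ℝ) (hp : ∀ x, 0 < p x) (hps : ∑ x : ∀ j, X j, p x = 1)
    (hpair : ∀ i j : V, i ≠ j → ¬ G.Adj i j →
      CondIndep p {i} {j} (Finset.univ \ {i, j})) :
    ∀ j : V, CondIndep p {j}
      (Finset.univ \ insert j (G.neighborFinset j)) (G.neighborFinset j) := by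
  intro j
  set N := G.neighborFinset j with hN
  set B := Finset.univ \ insert j N with hB
  -- main induction: for any B' ⊆ B, CondIndep p {j} B' (univ \ insert j B')
  have main : ∀ B' : Finset V, B' ⊆ B →
      CondIndep p {j} B' (Finset.univ \ insert j B') := by
    intro B'
    induction B' using Finset.induction_on with
    | empty =>
      intro _
      intro x
      simp only [Finset.union_empty, Finset.empty_union]
    | @insert i B' hiB' ih =>
      intro hsub
      have hiB : i ∈ B := hsub (Finset.mem_insert_self i B')
      have hB'B : B' ⊆ B := fun k hk => hsub (Finset.mem_insert_of_mem hk)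
      have hiB2 : ¬ i = j ∧ ¬ G.Adj j i := by
        rw [hB, hN] at hiB; simpa using hiB
      have hij : i ≠ j := hiB2.1
      have hadj : ¬ G.Adj j i := hiB2.2
      have hjB' : j ∉ B' := by
        intro h
        have := hB'B h
        rw [hB] at this; simp at this
      have hjiB' : j ∉ insert i B' := by
        simp [Ne.symm hij, hjB']
      -- key form from induction hypothesis, T₁ := univ \ insert j B'
      have hkey1 := key_of_condIndep j B' hjB' (ih hB'B)
      -- key form from the pairwise hypothesis, T₂ := univ \ {j, i}
      have hkey2 : ∀ x, p x * marg p (Finset.univ \ {j, i}) x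
          = marg p (Finset.univ \ {i}) x * marg p (Finset.univ \ {j}) x := by
        intro x
        have h2 := hpair j i (Ne.symm hij) hadj x
        have e21 : ({j} : Finset V) ∪ {i} ∪ (Finset.univ \ {j, i})
            = Finset.univ := by
          ext k; simp [Finset.mem_sdiff, Finset.mem_insert]
        have e22 : ({j} : Finset V) ∪ (Finset.univ \ {j, i})
            = Finset.univ \ {i} := by
          ext k; simp [Finset.mem_sdiff, Finset.mem_insert]
          constructor
          · rintro (rfl | h) <;> [exact Ne.symm hij; tauto]
          · intro hk; by_cases hkj : k = j <;> tauto
        have e23 : ({i} : Finset V) ∪ (Finset.univ \ {j, i})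
            = Finset.univ \ {j} := by
          ext k; simp [Finset.mem_sdiff, Finset.mem_insert]
          constructor
          · rintro (rfl | h) <;> [exact hij; tauto]
          · intro hk; by_cases hki : k = i <;> tauto
        rw [e21, e22, e23, marg_univ] at h2
        exact h2
      -- ratio depends only on coordinates outside insert i B' (together with j)
      set Z : Finset V := Finset.univ \ insert j (insert i B') with hZ
      have hjZ : j ∉ Z := by simp [hZ]
      have hr : ∀ x x' : ∀ j, X j, (∀ k ∈ insert j Z, x k = x' k) →
          p x / marg p (Finset.univ \ {j}) x
            = p x' / marg p (Finset.univ \ {j}) x' := by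
        intro x x' hagree
        -- intermediate point: x' except coordinate i taken from x
        set mid : ∀ k, X k := fun k => if h : k = i then h ▸ (x i) else x' k with hmid
        have hmid_i : mid i = x i := by simp [hmid]
        have hmid_ne : ∀ k, k ≠ i → mid k = x' k := by
          intro k hk; simp [hmid, hk]
        have step1 : p x / marg p (Finset.univ \ {j}) x
            = p mid / marg p (Finset.univ \ {j}) mid := by
          apply ratio_congr hp j (Finset.univ \ insert j B')
          · exact hkey1
          · intro k hk
            have hk' : k ∉ B' := by
              rcases Finset.mem_insert.1 hk with rfl | hk
              · exact hjB'
              · simp only [Finset.mem_sdiff, Finset.mem_univ, true_and,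
                  Finset.mem_insert, not_or] at hk
                exact hk.2
            by_cases hki : k = i
            · subst hki; rw [hmid_i]
            · rw [hmid_ne k hki]
              apply hagree
              by_cases hkj : k = j
              · rw [hkj]; exact Finset.mem_insert_self j Z
              · apply Finset.mem_insert_of_mem
                rw [hZ]
                simp only [Finset.mem_sdiff, Finset.mem_univ, true_and,
                  Finset.mem_insert, not_or]
                exact ⟨hkj, hki, hk'⟩
        have step2 : p mid / marg p (Finset.univ \ {j}) mid
            = p x' / marg p (Finset.univ \ {j}) x' := by
          apply ratio_congr hp j (Finset.univ \ ({j, i} : Finset V))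
          · intro y
            have e24 : insert j (Finset.univ \ ({j, i} : Finset V))
                = Finset.univ \ {i} := by
              ext k; simp [Finset.mem_insert, Finset.mem_sdiff]
              constructor
              · rintro (rfl | h) <;> [exact Ne.symm hij; tauto]
              · intro hk; by_cases hkj : k = j <;> tauto
            rw [e24]
            exact hkey2 y
          · intro k hk
            have e24 : insert j (Finset.univ \ ({j, i} : Finset V))
                = Finset.univ \ {i} := by
              ext k; simp [Finset.mem_insert, Finset.mem_sdiff]
              constructor
              · rintro (rfl | h) <;> [exact Ne.symm hij; tauto]
              · intro hk; by_cases hkj : k = j <;> tauto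
            rw [e24] at hk
            simp at hk
            exact hmid_ne k hk
        rw [step1, step2]
      -- assemble: swap identity, then counting, then translate
      have hswap := swap_identity hp j Z hjZ hr
      have hkey := key_of_swap j Z hjZ hswap
      have eZ : insert j Z = Finset.univ \ insert i B' := by
        rw [hZ]
        ext k
        simp only [Finset.mem_insert, Finset.mem_sdiff, Finset.mem_univ, true_and,
          not_or]
        constructor
        · rintro (rfl | ⟨h1, h2, h3⟩)
          · exact ⟨fun h => hij h.symm, hjB'⟩
          · exact ⟨h2, h3⟩
        · intro ⟨h2, h3⟩
          by_cases hkj : k = j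
          · exact Or.inl hkj
          · exact Or.inr ⟨hkj, h2, h3⟩
      rw [eZ] at hkey
      apply condIndep_of_key j (insert i B') hjiB'
      intro x
      have := hkey x
      rwa [hZ] at this
  -- conclude: B ⊆ B, and univ \ insert j B = N
  have hfin := main B (le_refl B)
  have hjN : j ∉ N := by
    rw [hN]
    exact G.notMem_neighborFinset_self j
  have eN : Finset.univ \ insert j B = N := by
    ext k
    constructor
    · intro hk
      rw [Finset.mem_sdiff] at hk
      have hk2 := hk.2
      rw [Finset.mem_insert] at hk2
      push_neg at hk2
      obtain ⟨hkj, hkB⟩ := hk2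
      rw [hB, Finset.mem_sdiff] at hkB
      push_neg at hkB
      have := hkB (Finset.mem_univ k)
      rcases Finset.mem_insert.1 this with rfl | h
      · exact absurd rfl hkj
      · exact h
    · intro hk
      rw [Finset.mem_sdiff]
      refine ⟨Finset.mem_univ k, ?_⟩
      intro hmem
      rcases Finset.mem_insert.1 hmem with rfl | h
      · exact hjN hk
      · rw [hB, Finset.mem_sdiff] at h
        exact h.2 (Finset.mem_insert_of_mem hk)
  rwa [eN] at hfin
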